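/- Fix ε ∈ (0, 1/2], an integer m ≥ 1 and d ∈ [0,1]. Write t = tanh(ε/2). Let b_1, …, b_m be i.i.d. Bernoulli(1/2 + t(d − 1/2)) random variables, let L be an independent real random variable with Laplace(0, 1/(εm)) distribution, and define the estimator d̃ = (1/t)·((1/m)·Σ_{i=1}^m b_i − 1/2 + t/2) + L. Then E[d̃] = d, and the mean squared error satisfies E[(d̃ − d)²] = (1/(4m))·(1/t² − 1) + d(1−d)/m + 2/(m²ε²) ≤ 1/(4m·t²) + 2/(m²ε²). -/

import Mathlib

open MeasureTheory ProbabilityTheory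

/-- The law of a `Laplace(0, b)` random variable. -/
noncomputable def laplaceMeasure (b : ℝ) : Measure ℝ :=
  volume.withDensity fun x => ENNReal.ofReal (1 / (2 * b) * Real.exp (-|x| / b))

/-!
With `p = 1/2 + t(d - 1/2)` and `S = ∑ bᵢ`, the estimator is `S/(tm) + (t - 1)/(2t) + L`.
Since `E S = mp` and `E L = 0` it is unbiased, so its mean squared error is its variance, which by
independence is `Var S/(tm)² + Var L = p(1 - p)/(t²m) + 2/(εm)²`. The identity
`p(1 - p) = 1/4 - t²(d - 1/2)²` turns this into the stated formula, and shows that the bound is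
off by exactly `(d - 1/2)²/m`.
-/

open Real Set

section Laplace

variable {b : ℝ}

lemma integral_laplaceMeasure (hb : 0 ≤ b) (φ : ℝ → ℝ) :
    ∫ x, φ x ∂laplaceMeasure b = ∫ x, 1 / (2 * b) * exp (-|x| / b) * φ x := by
  rw [laplaceMeasure, integral_withDensity_eq_integral_toReal_smul (by fun_prop)
    (.of_forall fun _ => ENNReal.ofReal_lt_top)]
  simp_rw [ENNReal.toReal_ofReal (by positivity : (0 : ℝ) ≤ 1 / (2 * b) * exp _), smul_eq_mul]

lemma integrable_laplaceMeasure_iff (hb : 0 ≤ b) {φ : ℝ → ℝ} :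
    Integrable φ (laplaceMeasure b) ↔
      Integrable (fun x => 1 / (2 * b) * exp (-|x| / b) * φ x) := by
  rw [laplaceMeasure, integrable_withDensity_iff_integrable_smul' (by fun_prop)
    (.of_forall fun _ => ENNReal.ofReal_lt_top)]
  simp_rw [ENNReal.toReal_ofReal (by positivity : (0 : ℝ) ≤ 1 / (2 * b) * exp _), smul_eq_mul]

lemma integral_id_laplaceMeasure (hb : 0 ≤ b) : ∫ x, x ∂laplaceMeasure b = 0 := by
  have h := integral_neg_eq_self (fun x => 1 / (2 * b) * exp (-|x| / b) * x) volume
  simp only [abs_neg, mul_neg, integral_neg] at h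
  rw [integral_laplaceMeasure hb]
  linarith

lemma integrable_comp_abs_of_integrableOn_Ioi {f : ℝ → ℝ} (hf : IntegrableOn f (Ioi 0)) :
    Integrable (fun x => f |x|) := by
  have hIoi : IntegrableOn (fun x => f |x|) (Ioi 0) :=
    hf.congr_fun (fun x hx => by rw [abs_of_pos hx]) measurableSet_Ioi
  have hneg : MeasurableEmbedding fun x : ℝ => -x := (Homeomorph.neg ℝ).measurableEmbedding
  have hIic : IntegrableOn (fun x => f |x|) (Iic 0) := by
    rw [← Measure.map_neg_eq_self (volume : Measure ℝ), hneg.integrableOn_map_iff]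
    simp_rw [Function.comp_def, abs_neg, neg_preimage, neg_Iic, neg_zero]
    exact (integrableOn_Ici_iff_integrableOn_Ioi).2 hIoi
  simpa using hIic.union hIoi

-- The shape of `integral_rpow_mul_exp_neg_mul_rpow`, evaluated at `|x|`.
lemma laplace_pdf_mul_sq_eq (x : ℝ) :
    1 / (2 * b) * exp (-|x| / b) * x ^ 2 =
      1 / (2 * b) * (|x| ^ (2 : ℝ) * exp (-(1 / b) * |x| ^ (1 : ℝ))) := by
  rw [rpow_one, rpow_two, sq_abs]
  ring_nf

lemma integrable_sq_laplaceMeasure (hb : 0 < b) :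
    Integrable (fun x => x ^ 2) (laplaceMeasure b) := by
  rw [integrable_laplaceMeasure_iff hb.le]
  simp_rw [laplace_pdf_mul_sq_eq]
  exact integrable_comp_abs_of_integrableOn_Ioi ((integrableOn_rpow_mul_exp_neg_mul_rpow
    (by norm_num) one_pos (one_div_pos.mpr hb)).const_mul _)

lemma integral_sq_laplaceMeasure (hb : 0 < b) : ∫ x, x ^ 2 ∂laplaceMeasure b = 2 * b ^ 2 := by
  rw [integral_laplaceMeasure hb.le]
  simp_rw [laplace_pdf_mul_sq_eq]
  rw [integral_comp_abs
      (f := fun x => 1 / (2 * b) * (x ^ (2 : ℝ) * exp (-(1 / b) * x ^ (1 : ℝ)))),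
    integral_const_mul, integral_rpow_mul_exp_neg_mul_rpow one_pos (by norm_num)
    (one_div_pos.mpr hb)]
  norm_num [Gamma_nat_eq_factorial]
  field_simp

end Laplace

section RandomVariables

variable {Ω : Type*} [MeasurableSpace Ω] {P : Measure Ω}

section LaplaceLaw

variable {L : Ω → ℝ} {b : ℝ}

lemma memLp_two_of_map_eq_laplaceMeasure (hL : AEMeasurable L P) (hb : 0 < b)
    (hlaw : P.map L = laplaceMeasure b) : MemLp L 2 P := by
  refine (memLp_map_measure_iff aestronglyMeasurable_id hL).1 ?_
  rw [hlaw, memLp_two_iff_integrable_sq aestronglyMeasurable_id]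
  exact integrable_sq_laplaceMeasure hb

lemma integral_eq_zero_of_map_eq_laplaceMeasure (hL : AEMeasurable L P) (hb : 0 ≤ b)
    (hlaw : P.map L = laplaceMeasure b) : P[L] = 0 :=
  calc P[L] = ∫ x, x ∂P.map L := (integral_map hL aestronglyMeasurable_id).symm
    _ = 0 := hlaw ▸ integral_id_laplaceMeasure hb

lemma variance_of_map_eq_laplaceMeasure (hL : AEMeasurable L P) (hb : 0 < b)
    (hlaw : P.map L = laplaceMeasure b) : Var[L; P] = 2 * b ^ 2 := by
  rw [← variance_id_map hL, hlaw,
    variance_of_integral_eq_zero aemeasurable_id (integral_id_laplaceMeasure hb.le)]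
  exact integral_sq_laplaceMeasure hb

end LaplaceLaw

section ZeroOne

variable {X : Ω → ℝ} {p : ℝ}

lemma memLp_of_zero_or_one [IsFiniteMeasure P] (hX : Measurable X)
    (h01 : ∀ ω, X ω = 0 ∨ X ω = 1) (q : ENNReal) : MemLp X q P :=
  memLp_of_bounded (a := 0) (b := 1)
    (.of_forall fun ω => by rcases h01 ω with h | h <;> simp [h]) hX.aestronglyMeasurable q

lemma integral_of_zero_or_one (hX : Measurable X) (h01 : ∀ ω, X ω = 0 ∨ X ω = 1)
    (hp : 0 ≤ p) (hP : P {ω | X ω = 1} = ENNReal.ofReal p) : P[X] = p := by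
  have hind : (X ⁻¹' {1}).indicator 1 = X := by
    funext ω
    rcases h01 ω with h | h <;> simp [h]
  rw [← hind, integral_indicator_one (hX (measurableSet_singleton 1)), measureReal_def]
  exact (congrArg ENNReal.toReal hP).trans (ENNReal.toReal_ofReal hp)

lemma variance_of_zero_or_one [IsProbabilityMeasure P] (hX : Measurable X)
    (h01 : ∀ ω, X ω = 0 ∨ X ω = 1) (hp : 0 ≤ p)
    (hP : P {ω | X ω = 1} = ENNReal.ofReal p) : Var[X; P] = p * (1 - p) := by
  have hsq : X ^ 2 = X := by
    funext ω
    rcases h01 ω with h | h <;> simp [h]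
  rw [variance_eq_sub (memLp_of_zero_or_one hX h01 2), hsq, integral_of_zero_or_one hX h01 hp hP]
  ring

variable {ι : Type*} [Fintype ι] {X : ι → Ω → ℝ}

lemma integral_sum_of_zero_or_one [IsFiniteMeasure P] (hX : ∀ i, Measurable (X i))
    (h01 : ∀ i ω, X i ω = 0 ∨ X i ω = 1) (hp : 0 ≤ p)
    (hP : ∀ i, P {ω | X i ω = 1} = ENNReal.ofReal p) :
    ∫ ω, ∑ i, X i ω ∂P = Fintype.card ι * p := by
  rw [integral_finsetSum _ fun i _ => (memLp_of_zero_or_one (hX i) (h01 i) 1).integrable le_rfl]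
  simp [integral_of_zero_or_one (hX _) (h01 _) hp (hP _)]

lemma variance_sum_of_zero_or_one [IsProbabilityMeasure P] (hX : ∀ i, Measurable (X i))
    (h01 : ∀ i ω, X i ω = 0 ∨ X i ω = 1) (hp : 0 ≤ p)
    (hP : ∀ i, P {ω | X i ω = 1} = ENNReal.ofReal p)
    (hindep : Pairwise fun i j => X i ⟂ᵢ[P] X j) :
    Var[fun ω => ∑ i, X i ω; P] = Fintype.card ι * (p * (1 - p)) := by
  rw [← Finset.sum_fn, IndepFun.variance_sum (fun i _ => memLp_of_zero_or_one (hX i) (h01 i) 2)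
    fun i _ j _ hij => hindep hij]
  simp [variance_of_zero_or_one (hX _) (h01 _) hp (hP _)]

end ZeroOne

lemma ProbabilityTheory.iIndepFun.indepFun_sum_option_elim {ι : Type*} [Fintype ι]
    {X : ι → Ω → ℝ} {Y : Ω → ℝ} (h : iIndepFun (fun o : Option ι => o.elim Y X) P)
    (hX : ∀ i, Measurable (X i)) (hY : Measurable Y) : (fun ω => ∑ i, X i ω) ⟂ᵢ[P] Y := by
  have := h.indepFun_finsetSum_of_notMem (fun o => by cases o; exacts [hY, hX _])
    (s := Finset.univ.map .some) (i := none) (by simp)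
  simpa [Finset.sum_fn] using this

variable [IsProbabilityMeasure P] {S L : Ω → ℝ}

lemma integral_affine_add (hS : Integrable S P) (hL : Integrable L P) (c a : ℝ) :
    ∫ ω, c * S ω + a + L ω ∂P = c * P[S] + a + P[L] := by
  rw [integral_add (f := fun ω => c * S ω + a) ((hS.const_mul c).add (integrable_const a)) hL,
    integral_add (hS.const_mul c) (integrable_const a), integral_const_mul]
  simp

lemma ProbabilityTheory.IndepFun.variance_affine_add (hS : MemLp S 2 P) (hL : MemLp L 2 P)
    (h : S ⟂ᵢ[P] L) (c a : ℝ) :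
    Var[fun ω => c * S ω + a + L ω; P] = c ^ 2 * Var[S; P] + Var[L; P] := by
  have hSaff : (fun ω => c * S ω + a) ⟂ᵢ[P] L :=
    h.comp ((measurable_const_mul c).add_const a) measurable_id
  rw [hSaff.variance_fun_add (X := fun ω => c * S ω + a)
      ((hS.const_mul c).add (memLp_const a)) hL,
    variance_add_const (hS.const_mul c).aestronglyMeasurable, variance_const_mul]

end RandomVariables

theorem stmt_11_general {Ω : Type*} [MeasurableSpace Ω] (P : Measure Ω) [IsProbabilityMeasure P]
    (ε : ℝ) (hε0 : 0 < ε) (m : ℕ) (hm : 1 ≤ m) (d : ℝ)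
    (hd : d ∈ Set.Icc (0 : ℝ) 1)
    (t : ℝ) (ht : t = Real.tanh (ε / 2))
    (b : Fin m → Ω → ℝ) (L : Ω → ℝ)
    (hbmeas : ∀ i, Measurable (b i)) (hLmeas : Measurable L)
    (hb01 : ∀ i ω, b i ω = 0 ∨ b i ω = 1)
    (hbdist : ∀ i, P {ω | b i ω = 1} = ENNReal.ofReal (1 / 2 + t * (d - 1 / 2)))
    (hLlaw : Measure.map L P = laplaceMeasure (1 / (ε * m)))
    (hindep : iIndepFun (fun o : Option (Fin m) => Option.elim o L b) P) :
    (∫ ω, ((1 / t) * ((1 / (m : ℝ)) * ∑ i, b i ω - 1 / 2 + t / 2) + L ω) ∂P) = d ∧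
    (∫ ω, (((1 / t) * ((1 / (m : ℝ)) * ∑ i, b i ω - 1 / 2 + t / 2) + L ω) - d) ^ 2 ∂P) =
      (1 / (4 * m)) * (1 / t ^ 2 - 1) + d * (1 - d) / m + 2 / (m ^ 2 * ε ^ 2) ∧
    (1 / (4 * m)) * (1 / t ^ 2 - 1) + d * (1 - d) / m + 2 / (m ^ 2 * ε ^ 2) ≤
      1 / (4 * m * t ^ 2) + 2 / (m ^ 2 * ε ^ 2) := by
  have ht0 : 0 < t := ht ▸ tanh_eq_sinh_div_cosh (ε / 2) ▸
    div_pos (sinh_pos_iff.2 (by linarith)) (cosh_pos _)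
  have hp : 0 ≤ 1 / 2 + t * (d - 1 / 2) := by nlinarith [hd.1, hd.2, ht ▸ tanh_lt_one (ε / 2)]
  have hm0 : (m : ℝ) ≠ 0 := Nat.cast_ne_zero.2 (by omega)
  have hβ : 0 < 1 / (ε * m) := by positivity
  have hS := memLp_finsetSum Finset.univ fun i _ =>
    memLp_of_zero_or_one (P := P) (hbmeas i) (hb01 i) 2
  have hL := memLp_two_of_map_eq_laplaceMeasure hLmeas.aemeasurable hβ hLlaw
  have hestimator : ∀ ω, (1 / t) * ((1 / (m : ℝ)) * ∑ i, b i ω - 1 / 2 + t / 2) + L ω =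
      1 / (t * m) * ∑ i, b i ω + (t - 1) / (2 * t) + L ω := fun ω => by field_simp; ring
  have hmean : ∫ ω, 1 / (t * m) * ∑ i, b i ω + (t - 1) / (2 * t) + L ω ∂P = d := by
    rw [integral_affine_add (hS.integrable one_le_two) (hL.integrable one_le_two),
      integral_sum_of_zero_or_one hbmeas hb01 hp hbdist,
      integral_eq_zero_of_map_eq_laplaceMeasure hLmeas.aemeasurable hβ.le hLlaw]
    simp only [Fintype.card_fin]
    field_simp
    ring
  simp only [hestimator]
  refine ⟨hmean, ?_, ?_⟩
  · have hmse := variance_eq_integral (μ := P)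
      (X := fun ω => 1 / (t * m) * ∑ i, b i ω + (t - 1) / (2 * t) + L ω) (by fun_prop)
    rw [hmean] at hmse
    rw [← hmse, (hindep.indepFun_sum_option_elim hbmeas hLmeas).variance_affine_add hS hL,
      variance_sum_of_zero_or_one hbmeas hb01 hp hbdist
        fun i j hij => hindep.indepFun (Option.some_injective _ |>.ne hij),
      variance_of_map_eq_laplaceMeasure hLmeas.aemeasurable hβ hLlaw]
    simp only [Fintype.card_fin]
    field_simp
    ring
  · have hgap : 1 / (4 * m * t ^ 2) - (1 / (4 * m) * (1 / t ^ 2 - 1) + d * (1 - d) / m) =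
        (d - 1 / 2) ^ 2 / m := by field_simp; ring
    have : 0 ≤ (d - 1 / 2) ^ 2 / m := by positivity
    linarith

/-- Bias and mean squared error of the improved pan-private density estimator (OptBern):
with `t = tanh(ε/2)`, if `b_1, …, b_m` are i.i.d. `Bernoulli(1/2 + t(d − 1/2))`, `L` is an
independent `Laplace(0, 1/(εm))` random variable, and
`d̃ = (1/t)((1/m)∑ b_i − 1/2 + t/2) + L`, then `E[d̃] = d` and
`E[(d̃ − d)²] = (1/(4m))(1/t² − 1) + d(1−d)/m + 2/(m²ε²) ≤ 1/(4mt²) + 2/(m²ε²)`. -/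
theorem stmt_11 {Ω : Type*} [MeasurableSpace Ω] (P : Measure Ω) [IsProbabilityMeasure P]
    (ε : ℝ) (hε0 : 0 < ε) (hε1 : ε ≤ 1 / 2) (m : ℕ) (hm : 1 ≤ m) (d : ℝ)
    (hd : d ∈ Set.Icc (0 : ℝ) 1)
    (t : ℝ) (ht : t = Real.tanh (ε / 2))
    (b : Fin m → Ω → ℝ) (L : Ω → ℝ)
    (hbmeas : ∀ i, Measurable (b i)) (hLmeas : Measurable L)
    (hb01 : ∀ i ω, b i ω = 0 ∨ b i ω = 1)
    (hbdist : ∀ i, P {ω | b i ω = 1} = ENNReal.ofReal (1 / 2 + t * (d - 1 / 2)))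
    (hLlaw : Measure.map L P = laplaceMeasure (1 / (ε * m)))
    (hindep : iIndepFun (fun o : Option (Fin m) => Option.elim o L b) P) :
    (∫ ω, ((1 / t) * ((1 / (m : ℝ)) * ∑ i, b i ω - 1 / 2 + t / 2) + L ω) ∂P) = d ∧
    (∫ ω, (((1 / t) * ((1 / (m : ℝ)) * ∑ i, b i ω - 1 / 2 + t / 2) + L ω) - d) ^ 2 ∂P) =
      (1 / (4 * m)) * (1 / t ^ 2 - 1) + d * (1 - d) / m + 2 / (m ^ 2 * ε ^ 2) ∧
    (1 / (4 * m)) * (1 / t ^ 2 - 1) + d * (1 - d) / m + 2 / (m ^ 2 * ε ^ 2) ≤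
      1 / (4 * m * t ^ 2) + 2 / (m ^ 2 * ε ^ 2) :=
  stmt_11_general P ε hε0 m hm d hd t ht b L hbmeas hLmeas hb01 hbdist hLlaw hindep
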